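/- If Z is a spherically distributed random vector in R^p with finite second moment (i.e. HZ has the same distribution as Z for every orthogonal matrix H), then for every orthogonal projection P_c onto a subspace E_c, Var(Z | P_c Z) = λ Q_c almost surely for some real random variable λ, where Q_c = I − P_c (the diagonal conditional variance condition). -/

import Mathlib

/-!
Write `Y = P Z` and `Q = 1 - P`. An orthogonal `H` with `P H = P` fixes `Y`, so by sphericity
`(H Z, Y)` has the law of `(Z, Y)` and conditional expectations given `Y` do not change when `Z`
is replaced by `H Z`. The reflection `H = 2P - 1` gives `E[Z | Y] = Y`, hence
`Var(Z | Y) = E[(Q Z)(Q Z)ᵀ | Y] =: S`, and `S = H S Hᵀ` a.s. for each such `H`. In an eigenbasis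
of `P`, finitely many of them suffice (sign changes and transpositions of the coordinates spanning
`ker P`), and a matrix supported on `ker P` invariant under those is a multiple of `Q`.
-/

open MeasureTheory ProbabilityTheory Matrix

/-- The `(i,j)` entry of the conditional covariance matrix of a random vector `W` given the
σ-algebra `m`. -/
noncomputable def condVarEntry {Ω : Type*} (mΩ : MeasurableSpace Ω)
    (μ : @MeasureTheory.Measure Ω mΩ)
    (m : MeasurableSpace Ω) {p : ℕ} (W : Ω → (Fin p → ℝ)) (i j : Fin p) : Ω → ℝ :=
  μ[fun ω => (W ω i - (μ[fun ω' => W ω' i | m]) ω) *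
      (W ω j - (μ[fun ω' => W ω' j | m]) ω) | m]

namespace Matrix

variable {n : Type*} [Fintype n] [DecidableEq n]

lemma transpose_mul_self_diagonal_update_neg_one (k : n) :
    (diagonal (Function.update (1 : n → ℝ) k (-1)))ᵀ * diagonal (Function.update 1 k (-1)) =
      1 := by
  rw [diagonal_transpose, diagonal_mul_diagonal, ← diagonal_one]
  congr 1
  ext a
  rcases eq_or_ne a k with rfl | h <;> simp [*]

lemma diagonal_mul_diagonal_update_neg_one {d : n → ℝ} {k : n} (hk : d k = 0) :
    diagonal d * diagonal (Function.update 1 k (-1)) = diagonal d := by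
  rw [diagonal_mul_diagonal]
  congr 1
  ext a
  rcases eq_or_ne a k with rfl | h <;> simp [*]

lemma transpose_mul_self_permMatrix (σ : Equiv.Perm n) :
    (σ.permMatrix ℝ)ᵀ * σ.permMatrix ℝ = 1 := by
  rw [transpose_permMatrix, ← permMatrix_mul, mul_inv_cancel, permMatrix_one]

lemma diagonal_mul_swap_permMatrix {d : n → ℝ} {k l : n} (hk : d k = 0) (hl : d l = 0) :
    diagonal d * (Equiv.swap k l).permMatrix ℝ = diagonal d := by
  rw [Equiv.Perm.permMatrix, PEquiv.mul_toMatrix_toPEquiv]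
  ext a b
  simp only [submatrix_apply, id, Equiv.symm_swap, diagonal_apply, Equiv.swap_apply_def]
  split_ifs <;> simp_all

lemma swap_permMatrix_conj_apply (k l : n) (N : Matrix n n ℝ) (a b : n) :
    ((Equiv.swap k l).permMatrix ℝ * N * ((Equiv.swap k l).permMatrix ℝ)ᵀ) a b =
      N (Equiv.swap k l a) (Equiv.swap k l b) := by
  rw [transpose_permMatrix, Equiv.Perm.permMatrix, Equiv.Perm.permMatrix,
    PEquiv.toMatrix_toPEquiv_mul, PEquiv.mul_toMatrix_toPEquiv]
  simp [Equiv.Perm.inv_def]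

theorem exists_eq_smul_diagonal_of_conj_invariant {d : n → ℝ} (hd : ∀ k, d k = 0 ∨ d k = 1)
    {N : Matrix n n ℝ} (hproj : N = diagonal (1 - d) * N * (diagonal (1 - d))ᵀ)
    (hflip : ∀ k, d k = 0 → N = diagonal (Function.update 1 k (-1)) * N *
      (diagonal (Function.update 1 k (-1)))ᵀ)
    (hswap : ∀ k l, d k = 0 → d l = 0 →
      N = (Equiv.swap k l).permMatrix ℝ * N * ((Equiv.swap k l).permMatrix ℝ)ᵀ) :
    ∃ c : ℝ, N = c • diagonal (1 - d) := by
  have hzero : ∀ a b, d a = 1 ∨ d b = 1 → N a b = 0 := by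
    intro a b hab
    have h := congr_fun (congr_fun hproj a) b
    rw [diagonal_transpose, mul_diagonal, diagonal_mul] at h
    rcases hab with h1 | h1 <;> simpa [h1] using h
  have hoff : ∀ a b, a ≠ b → d b = 0 → N a b = 0 := by
    intro a b hab hb
    have h := congr_fun (congr_fun (hflip b hb) a) b
    rw [diagonal_transpose, mul_diagonal, diagonal_mul] at h
    simp only [Function.update_self, Function.update_of_ne hab, Pi.one_apply] at h
    linarith
  by_cases h0 : ∃ k, d k = 0
  swap
  · push Not at h0
    refine ⟨0, ext fun a b => ?_⟩
    simpa using hzero a b (Or.inl ((hd a).resolve_left (h0 a)))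
  obtain ⟨k, hk⟩ := h0
  refine ⟨N k k, ext fun a b => ?_⟩
  rcases hd b with hb | hb
  · rcases eq_or_ne a b with rfl | hab
    · have h := congr_fun (congr_fun (hswap k a hk hb) k) k
      rw [swap_permMatrix_conj_apply, Equiv.swap_apply_left] at h
      simp [hb, h]
    · simp [hoff a b hab hb, hab]
  · rw [hzero a b (Or.inr hb)]
    rcases eq_or_ne a b with rfl | hab
    · simp [hb]
    · simp [hab]

omit [Fintype n] [DecidableEq n] in
lemma star_eq_transpose_real (A : Matrix n n ℝ) : star A = Aᵀ := by
  rw [star_eq_conjTranspose, conjTranspose_eq_transpose_of_trivial]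

theorem IsSymm.exists_conj_diagonal_zero_or_one {P : Matrix n n ℝ} (hsymm : P.IsSymm)
    (hidem : P * P = P) :
    ∃ (U : unitary (Matrix n n ℝ)) (d : n → ℝ), (∀ k, d k = 0 ∨ d k = 1) ∧
      P = Unitary.conjStarAlgAut ℝ _ U (diagonal d) := by
  have hA : P.IsHermitian := isHermitian_iff_isSymm.2 hsymm
  have hspec :
      P = Unitary.conjStarAlgAut ℝ _ hA.eigenvectorUnitary (diagonal hA.eigenvalues) := by
    simpa [RCLike.ofReal_real_eq_id] using hA.spectral_theorem
  refine ⟨_, _, fun k => ?_, hspec⟩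
  have hdiag : diagonal hA.eigenvalues * diagonal hA.eigenvalues = diagonal hA.eigenvalues :=
    EquivLike.injective (Unitary.conjStarAlgAut ℝ _ hA.eigenvectorUnitary)
      (by rw [map_mul, ← hspec, hidem])
  rw [diagonal_mul_diagonal] at hdiag
  exact IsIdempotentElem.iff_eq_zero_or_one.1 (congr_fun (diagonal_injective hdiag) k)

theorem IsSymm.exists_finite_orthogonal_set_conj_invariant_eq_smul {P : Matrix n n ℝ}
    (hsymm : P.IsSymm) (hidem : P * P = P) :
    ∃ 𝓗 : Set (Matrix n n ℝ), 𝓗.Finite ∧ (∀ H ∈ 𝓗, Hᵀ * H = 1 ∧ P * H = P) ∧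
      ∀ M : Matrix n n ℝ, M = (1 - P) * M * (1 - P)ᵀ → (∀ H ∈ 𝓗, M = H * M * Hᵀ) →
        ∃ c : ℝ, M = c • (1 - P) := by
  obtain ⟨U, d, hd, rfl⟩ := hsymm.exists_conj_diagonal_zero_or_one hidem
  set φ := Unitary.conjStarAlgAut ℝ (Matrix n n ℝ) U
  have hφT : ∀ A, (φ A)ᵀ = φ Aᵀ := fun A => by
    rw [← star_eq_transpose_real, ← map_star, star_eq_transpose_real]
  let G : {k // d k = 0} ⊕ {kl : n × n // d kl.1 = 0 ∧ d kl.2 = 0} → Matrix n n ℝ :=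
    Sum.elim (fun k => diagonal (Function.update 1 k.1 (-1)))
      (fun kl => (Equiv.swap kl.1.1 kl.1.2).permMatrix ℝ)
  have hG : ∀ t, (G t)ᵀ * G t = 1 ∧ diagonal d * G t = diagonal d := by
    rintro (⟨k, hk⟩ | ⟨⟨k, l⟩, hk, hl⟩)
    · exact ⟨transpose_mul_self_diagonal_update_neg_one k,
        diagonal_mul_diagonal_update_neg_one hk⟩
    · exact ⟨transpose_mul_self_permMatrix _, diagonal_mul_swap_permMatrix hk hl⟩
  have hconj : ∀ A N, φ N = φ A * φ N * (φ A)ᵀ ↔ N = A * N * Aᵀ := fun A N => by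
    rw [hφT, ← map_mul, ← map_mul, (EquivLike.injective φ).eq_iff]
  have hQ : 1 - φ (diagonal d) = φ (diagonal (1 - d)) := by
    rw [← map_one φ, ← map_sub, ← diagonal_one', diagonal_sub]
    rfl
  refine ⟨Set.range (φ ∘ G), Set.finite_range _, ?_, fun M hMQ hMH => ?_⟩
  · rintro _ ⟨t, rfl⟩
    refine ⟨?_, ?_⟩
    · rw [Function.comp_apply, hφT, ← map_mul, (hG t).1, map_one]
    · rw [Function.comp_apply, ← map_mul, (hG t).2]
  obtain ⟨N, rfl⟩ := EquivLike.surjective φ M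
  rw [hQ, hconj] at hMQ
  have hinv : ∀ t, N = G t * N * (G t)ᵀ := fun t => (hconj _ _).1 (hMH _ ⟨t, rfl⟩)
  obtain ⟨c, rfl⟩ := exists_eq_smul_diagonal_of_conj_invariant hd hMQ
    (fun k hk => hinv (.inl ⟨k, hk⟩)) (fun k l hk hl => hinv (.inr ⟨(k, l), hk, hl⟩))
  exact ⟨c, by rw [hQ, map_smul]⟩

lemma IsSymm.transpose_mul_self_two_smul_sub_one {P : Matrix n n ℝ} (hsymm : P.IsSymm)
    (hidem : P * P = P) : (2 • P - 1)ᵀ * (2 • P - 1) = 1 := by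
  rw [transpose_sub, transpose_smul, hsymm.eq, transpose_one, sub_mul, mul_sub, mul_sub,
    Matrix.smul_mul, Matrix.mul_smul, smul_smul, hidem, mul_one, one_mul, mul_one]
  module

lemma mul_two_smul_sub_one_of_mul_self {P : Matrix n n ℝ} (hidem : P * P = P) :
    P * (2 • P - 1) = P := by
  rw [mul_sub, Matrix.mul_smul, hidem, mul_one, two_smul, add_sub_cancel_right]

omit [DecidableEq n] in
lemma mul_mul_transpose_apply (A M : Matrix n n ℝ) (i j : n) :
    (A * M * Aᵀ) i j = ∑ kl : n × n, A i kl.1 * A j kl.2 * M kl.1 kl.2 := by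
  simp only [mul_apply, transpose_apply, Finset.sum_mul, Fintype.sum_prod_type]
  rw [Finset.sum_comm]
  exact Finset.sum_congr rfl fun k _ => Finset.sum_congr rfl fun l _ => by ring

omit [DecidableEq n] in
lemma mulVec_apply_mul_mulVec_apply (A : Matrix n n ℝ) (x : n → ℝ) (i j : n) :
    (A *ᵥ x) i * (A *ᵥ x) j = ∑ kl : n × n, A i kl.1 * A j kl.2 * (x kl.1 * x kl.2) := by
  simp only [mulVec, dotProduct, Finset.sum_mul_sum, Fintype.sum_prod_type]
  exact Finset.sum_congr rfl fun k _ => Finset.sum_congr rfl fun l _ => by ring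

omit [DecidableEq n] in
lemma measurable_mulVec (A : Matrix n n ℝ) : Measurable fun x : n → ℝ => A *ᵥ x :=
  (continuous_const.matrix_mulVec continuous_id).measurable

omit [DecidableEq n] in
lemma measurable_mulVec_apply_mul (A : Matrix n n ℝ) (i j : n) :
    Measurable fun x : n → ℝ => (A *ᵥ x) i * (A *ᵥ x) j :=
  ((measurable_pi_apply i).comp (measurable_mulVec A)).mul
    ((measurable_pi_apply j).comp (measurable_mulVec A))

end Matrix

/-- `E[X Xᵀ | m]` at `ω`. -/
noncomputable def condSecondMoment {Ω n : Type*} {mΩ : MeasurableSpace Ω} (μ : Measure Ω)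
    (m : MeasurableSpace Ω) (X : Ω → n → ℝ) (ω : Ω) : Matrix n n ℝ :=
  Matrix.of fun i j => μ[fun ω => X ω i * X ω j | m] ω

section

variable {Ω : Type*} [mΩ : MeasurableSpace Ω] {μ : Measure Ω}

theorem condExp_comp_ae_eq_of_map_prodMk_eq {β E F : Type*} [mβ : MeasurableSpace β]
    [MeasurableSpace E] [StandardBorelSpace E] [Nonempty E]
    [NormedAddCommGroup F] [NormedSpace ℝ F] [CompleteSpace F] [IsFiniteMeasure μ]
    {Y : Ω → β} {X X' : Ω → E} (hY : Measurable Y) (hX : Measurable X) (hX' : Measurable X')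
    (hlaw : μ.map (fun ω => (Y ω, X' ω)) = μ.map (fun ω => (Y ω, X ω)))
    {f : E → F} (hf : StronglyMeasurable f) (hfX : Integrable (f ∘ X) μ) :
    μ[f ∘ X' | mβ.comap Y] =ᵐ[μ] μ[f ∘ X | mβ.comap Y] := by
  have hmap : μ.map X' = μ.map X := by
    rw [← Measure.snd_map_prodMk hY, hlaw, Measure.snd_map_prodMk hY]
  have hfX' : Integrable (f ∘ X') μ := by
    rw [← integrable_map_measure hf.aestronglyMeasurable hX'.aemeasurable, hmap,
      integrable_map_measure hf.aestronglyMeasurable hX.aemeasurable]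
    exact hfX
  have hcond : condDistrib X' Y μ = condDistrib X Y μ := by
    simp only [condDistrib_def, hlaw]
  refine (condExp_ae_eq_integral_condDistrib hY hX'.aemeasurable hf hfX').trans ?_
  rw [hcond]
  exact (condExp_ae_eq_integral_condDistrib hY hX.aemeasurable hf hfX).symm

variable {n : Type*} [Fintype n]

lemma integrable_mulVec_apply {X : Ω → n → ℝ} (hX : ∀ i, Integrable (fun ω => X ω i) μ)
    (A : Matrix n n ℝ) (i : n) : Integrable (fun ω => (A *ᵥ X ω) i) μ := by
  simp only [mulVec, dotProduct]
  exact integrable_finsetSum _ fun j _ => (hX j).const_mul _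

lemma integrable_mulVec_apply_mul {X : Ω → n → ℝ}
    (hX : ∀ i j, Integrable (fun ω => X ω i * X ω j) μ) (A : Matrix n n ℝ) (i j : n) :
    Integrable (fun ω => (A *ᵥ X ω) i * (A *ᵥ X ω) j) μ := by
  simp only [mulVec_apply_mul_mulVec_apply]
  exact integrable_finsetSum _ fun kl _ => (hX kl.1 kl.2).const_mul _

theorem condSecondMoment_mulVec_ae_eq {X : Ω → n → ℝ}
    (hX : ∀ i j, Integrable (fun ω => X ω i * X ω j) μ) (m : MeasurableSpace Ω)
    (A : Matrix n n ℝ) :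
    ∀ᵐ ω ∂μ, condSecondMoment μ m (fun ω => A *ᵥ X ω) ω = A * condSecondMoment μ m X ω * Aᵀ := by
  have hentry : ∀ i j, ∀ᵐ ω ∂μ, μ[fun ω => (A *ᵥ X ω) i * (A *ᵥ X ω) j | m] ω =
      ∑ kl : n × n, A i kl.1 * A j kl.2 * μ[fun ω => X ω kl.1 * X ω kl.2 | m] ω := by
    intro i j
    have hsum : (fun ω => (A *ᵥ X ω) i * (A *ᵥ X ω) j) =
        ∑ kl : n × n, (A i kl.1 * A j kl.2) • fun ω => X ω kl.1 * X ω kl.2 := by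
      ext ω
      simp [mulVec_apply_mul_mulVec_apply]
    have hsmul := ae_all_iff.2 fun kl : n × n =>
      condExp_smul (m := m) (μ := μ) (A i kl.1 * A j kl.2) fun ω => X ω kl.1 * X ω kl.2
    have hadd := condExp_finsetSum (s := Finset.univ)
      (fun (kl : n × n) _ => (hX kl.1 kl.2).smul (A i kl.1 * A j kl.2)) m
    filter_upwards [hadd, hsmul] with ω hω hωs
    rw [hsum, hω, Finset.sum_apply]
    exact Finset.sum_congr rfl fun kl _ => by simp [hωs kl]
  filter_upwards [ae_all_iff.2 fun i => ae_all_iff.2 (hentry i)] with ω hω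
  ext i j
  rw [mul_mul_transpose_apply]
  exact hω i j

variable [IsFiniteMeasure μ]

theorem condExp_comp_mulVec_ae_eq {F : Type*} [NormedAddCommGroup F] [NormedSpace ℝ F]
    [CompleteSpace F] {Z : Ω → n → ℝ} (hZ : Measurable Z)
    {P H : Matrix n n ℝ} (hPH : P * H = P) (hH : μ.map (fun ω => H *ᵥ Z ω) = μ.map Z)
    {f : (n → ℝ) → F} (hf : StronglyMeasurable f) (hfZ : Integrable (f ∘ Z) μ) :
    μ[fun ω => f (H *ᵥ Z ω) | MeasurableSpace.comap (fun ω => P *ᵥ Z ω) inferInstance]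
      =ᵐ[μ] μ[fun ω => f (Z ω) | MeasurableSpace.comap (fun ω => P *ᵥ Z ω) inferInstance] := by
  have hHZ : Measurable fun ω => H *ᵥ Z ω := (measurable_mulVec H).comp hZ
  have hgraph : Measurable fun x : n → ℝ => (P *ᵥ x, x) :=
    (measurable_mulVec P).prodMk measurable_id
  have hlaw : μ.map (fun ω => (P *ᵥ Z ω, H *ᵥ Z ω)) = μ.map (fun ω => (P *ᵥ Z ω, Z ω)) := by
    have hPHZ : (fun ω => (P *ᵥ Z ω, H *ᵥ Z ω)) =
        (fun x => (P *ᵥ x, x)) ∘ fun ω => H *ᵥ Z ω := by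
      ext ω <;> simp [mulVec_mulVec, hPH]
    rw [hPHZ, ← Measure.map_map hgraph hHZ, hH, Measure.map_map hgraph hZ]
    rfl
  exact condExp_comp_ae_eq_of_map_prodMk_eq ((measurable_mulVec P).comp hZ) hZ hHZ hlaw hf hfZ

variable [DecidableEq n]

theorem condExp_apply_ae_eq_mulVec_apply {Z : Ω → n → ℝ} {P : Matrix n n ℝ} (hZ : Measurable Z)
    (hZi : ∀ i, Integrable (fun ω => Z ω i) μ) (hidem : P * P = P)
    (hrefl : μ.map (fun ω => (2 • P - 1) *ᵥ Z ω) = μ.map Z) (i : n) :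
    μ[fun ω => Z ω i | MeasurableSpace.comap (fun ω => P *ᵥ Z ω) inferInstance]
      =ᵐ[μ] fun ω => (P *ᵥ Z ω) i := by
  have hm : MeasurableSpace.comap (fun ω => P *ᵥ Z ω) inferInstance ≤ mΩ :=
    ((measurable_mulVec P).comp hZ).comap_le
  have hY : StronglyMeasurable[MeasurableSpace.comap (fun ω => P *ᵥ Z ω) inferInstance]
      fun ω => 2 * (P *ᵥ Z ω) i :=
    (((measurable_pi_apply i).comp (comap_measurable fun ω => P *ᵥ Z ω)).const_mul
      2).stronglyMeasurable
  have hYi : Integrable (fun ω => 2 * (P *ᵥ Z ω) i) μ :=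
    (integrable_mulVec_apply hZi P i).const_mul 2
  have hreflected : (fun ω => ((2 • P - 1) *ᵥ Z ω) i) =
      (fun ω => 2 * (P *ᵥ Z ω) i) - fun ω => Z ω i := by
    ext ω
    simp [sub_mulVec, two_smul, add_mulVec]
    ring
  have hinv := condExp_comp_mulVec_ae_eq hZ (mul_two_smul_sub_one_of_mul_self hidem) hrefl
    (measurable_pi_apply i).stronglyMeasurable (hZi i)
  rw [hreflected] at hinv
  filter_upwards [hinv, condExp_sub hYi (hZi i) _] with ω h1 h2
  rw [h2, condExp_of_stronglyMeasurable hm hY hYi] at h1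
  simp only [Pi.sub_apply] at h1
  linarith

theorem condVarEntry_ae_eq_condSecondMoment {p : ℕ} {Z : Ω → Fin p → ℝ}
    {P : Matrix (Fin p) (Fin p) ℝ} (hZ : Measurable Z) (hZi : ∀ i, Integrable (fun ω => Z ω i) μ)
    (hidem : P * P = P) (hrefl : μ.map (fun ω => (2 • P - 1) *ᵥ Z ω) = μ.map Z) :
    ∀ᵐ ω ∂μ,
      (Matrix.of fun i j =>
          condVarEntry mΩ μ (MeasurableSpace.comap (fun ω => P *ᵥ Z ω) inferInstance) Z i j ω) =
        condSecondMoment μ (MeasurableSpace.comap (fun ω => P *ᵥ Z ω) inferInstance)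
          (fun ω => (1 - P) *ᵥ Z ω) ω := by
  have hmean := condExp_apply_ae_eq_mulVec_apply hZ hZi hidem hrefl
  have hentry : ∀ i j,
      condVarEntry mΩ μ (MeasurableSpace.comap (fun ω => P *ᵥ Z ω) inferInstance) Z i j =ᵐ[μ]
        μ[fun ω => ((1 - P) *ᵥ Z ω) i * ((1 - P) *ᵥ Z ω) j |
          MeasurableSpace.comap (fun ω => P *ᵥ Z ω) inferInstance] := fun i j =>
    condExp_congr_ae <| by
      filter_upwards [hmean i, hmean j] with ω hi hj
      simp [sub_mulVec, hi, hj]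
  filter_upwards [ae_all_iff.2 fun i => ae_all_iff.2 (hentry i)] with ω hω
  ext i j
  exact hω i j

theorem condSecondMoment_ae_eq_conj {Z : Ω → n → ℝ} {P H : Matrix n n ℝ} (hZ : Measurable Z)
    (hZ2 : ∀ i j, Integrable (fun ω => Z ω i * Z ω j) μ) (hsymm : P.IsSymm) (hH : Hᵀ * H = 1)
    (hPH : P * H = P) (hlaw : μ.map (fun ω => H *ᵥ Z ω) = μ.map Z) :
    ∀ᵐ ω ∂μ,
      condSecondMoment μ (MeasurableSpace.comap (fun ω => P *ᵥ Z ω) inferInstance)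
          (fun ω => (1 - P) *ᵥ Z ω) ω =
        H * condSecondMoment μ (MeasurableSpace.comap (fun ω => P *ᵥ Z ω) inferInstance)
          (fun ω => (1 - P) *ᵥ Z ω) ω * Hᵀ := by
  have hHP : H * P = P := by
    have h : Hᵀ * P = P := by simpa [hsymm.eq] using congr_arg transpose hPH
    rw [← h, ← mul_assoc, mul_eq_one_comm.1 hH, one_mul, h]
  have hcomm : ∀ x, (1 - P) *ᵥ (H *ᵥ x) = H *ᵥ ((1 - P) *ᵥ x) := fun x => by
    rw [mulVec_mulVec, mulVec_mulVec, sub_mul, mul_sub, one_mul, mul_one, hPH, hHP]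
  have hQZ2 := integrable_mulVec_apply_mul hZ2 (1 - P)
  have hinv : ∀ i j, μ[fun ω => (H *ᵥ ((1 - P) *ᵥ Z ω)) i * (H *ᵥ ((1 - P) *ᵥ Z ω)) j |
        MeasurableSpace.comap (fun ω => P *ᵥ Z ω) inferInstance] =ᵐ[μ]
      μ[fun ω => ((1 - P) *ᵥ Z ω) i * ((1 - P) *ᵥ Z ω) j |
        MeasurableSpace.comap (fun ω => P *ᵥ Z ω) inferInstance] := fun i j => by
    simpa only [hcomm] using condExp_comp_mulVec_ae_eq hZ hPH hlaw
      (measurable_mulVec_apply_mul (1 - P) i j).stronglyMeasurable (hQZ2 i j)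
  filter_upwards [ae_all_iff.2 fun i => ae_all_iff.2 (hinv i),
    condSecondMoment_mulVec_ae_eq hQZ2 _ H] with ω hω hconj
  rw [← hconj]
  ext i j
  exact (hω i j).symm

end

/-- A spherically distributed square-integrable random vector satisfies the diagonal conditional
variance condition `Var(Z | P_c Z) = λ Q_c` a.s. for every orthogonal projection `P_c`. -/
theorem spherical_implies_dcv
    {Ω : Type*} [mΩ : MeasurableSpace Ω] (μ : Measure Ω) [IsProbabilityMeasure μ]
    (p : ℕ) (Z : Ω → (Fin p → ℝ)) (hZmeas : Measurable Z)
    (hZint2 : ∀ i j, Integrable (fun ω => Z ω i * Z ω j) μ)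
    -- sphericity: `H Z =d Z` for every orthogonal matrix `H`
    (hsph : ∀ Hm : Matrix (Fin p) (Fin p) ℝ, Hmᵀ * Hm = 1 →
      Measure.map (fun ω => Hm.mulVec (Z ω)) μ = Measure.map Z μ)
    (Pc : Matrix (Fin p) (Fin p) ℝ) (hPcsymm : Pc.IsSymm) (hPcidem : Pc * Pc = Pc)
    (m : MeasurableSpace Ω)
    (hm : m = MeasurableSpace.comap (fun ω => Pc.mulVec (Z ω)) inferInstance) :
    ∃ lam : Ω → ℝ, ∀ᵐ ω ∂μ,
      (Matrix.of fun i j => condVarEntry mΩ μ m Z i j ω) = lam ω • (1 - Pc) := by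
  subst hm
  have hZi : ∀ i, Integrable (fun ω => Z ω i) μ := fun i =>
    ((memLp_two_iff_integrable_sq ((measurable_pi_apply i).comp hZmeas).aestronglyMeasurable).2
      (by simpa [sq] using hZint2 i i)).integrable one_le_two
  obtain ⟨𝓗, h𝓗fin, h𝓗, hscalar⟩ :=
    hPcsymm.exists_finite_orthogonal_set_conj_invariant_eq_smul hPcidem
  set S := condSecondMoment μ (MeasurableSpace.comap (fun ω => Pc *ᵥ Z ω) inferInstance)
    (fun ω => (1 - Pc) *ᵥ Z ω)
  have hvar := condVarEntry_ae_eq_condSecondMoment hZmeas hZi hPcidem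
    (hsph _ (hPcsymm.transpose_mul_self_two_smul_sub_one hPcidem))
  have hproj : ∀ᵐ ω ∂μ, S ω = (1 - Pc) * S ω * (1 - Pc)ᵀ := by
    have hQ : (1 - Pc) * (1 - Pc) = 1 - Pc := IsIdempotentElem.one_sub hPcidem
    simpa only [mulVec_mulVec, hQ] using
      condSecondMoment_mulVec_ae_eq (integrable_mulVec_apply_mul hZint2 (1 - Pc)) _ (1 - Pc)
  have hinv : ∀ᵐ ω ∂μ, ∀ H ∈ 𝓗, S ω = H * S ω * Hᵀ :=
    (ae_ball_iff h𝓗fin.countable).2 fun H hH =>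
      condSecondMoment_ae_eq_conj hZmeas hZint2 hPcsymm (h𝓗 H hH).1 (h𝓗 H hH).2
        (hsph H (h𝓗 H hH).1)
  have hex : ∀ᵐ ω ∂μ, ∃ c : ℝ, (Matrix.of fun i j => condVarEntry mΩ μ
      (MeasurableSpace.comap (fun ω => Pc *ᵥ Z ω) inferInstance) Z i j ω) = c • (1 - Pc) := by
    filter_upwards [hvar, hproj, hinv] with ω hω hωproj hωinv
    rw [hω]
    exact hscalar _ hωproj hωinv
  exact ⟨fun ω => Classical.epsilon _, hex.mono fun ω => Classical.epsilon_spec⟩
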